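/- For q ≥ 3, the pair (C(A_q), Diag_q(S_q) ⋊ L) is an elusive pair: the group fixes Γ₁(C(A_q)) setwise (in fact acts transitively on it) but does not fix C(A_q) setwise. -/

import Mathlib

/-- The permutation code `C(T) = {α(g) : g ∈ T}` in `H(q,q)`. -/
def permCode {q : ℕ} (T : Set (Equiv.Perm (Fin q))) : Set (Fin q → Fin q) :=
  {v | ∃ g ∈ T, v = fun i => g i}

/-- The set of neighbours `Γ₁(C)` of a code `C`. -/
def codeNbrs {m q : ℕ} (C : Set (Fin m → Fin q)) : Set (Fin m → Fin q) :=
  {v | v ∉ C ∧ ∃ c ∈ C, hammingDist v c = 1}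

/-- The diagonal action `x_y`: apply the alphabet permutation `y` in every coordinate. -/
def diagAct {m q : ℕ} (y : Equiv.Perm (Fin q)) (v : Fin m → Fin q) : Fin m → Fin q :=
  fun i => y (v i)

/-- The action `σ(z)` permuting coordinate positions by `z`. -/
def posAct {m q : ℕ} (z : Equiv.Perm (Fin m)) (v : Fin m → Fin q) : Fin m → Fin q :=
  fun i => v (z⁻¹ i)

/-!
A word at Hamming distance one from `α(g)` that is not itself a permutation word has exactly
one letter `m` overwritten by another letter `a`, i.e. it is `update id m a ∘ g`. Since
`update id m a ∘ swap m a = update id m a`, the parity of `g` can be switched freely, so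
`Γ₁(C(A_q))` is the set of all words `update id m a ∘ g` with `m ≠ a` and `g ∈ S_q`. This set is
visibly stable under `μ ↦ y ∘ μ ∘ z`, and `2`-transitivity of `S_q` makes the action transitive
on it. On the other hand an odd diagonal permutation sends the identity word out of `C(A_q)`.
-/

open Function Equiv

theorem hammingDist_eq_one_iff {ι β : Type*} [Fintype ι] [DecidableEq ι] [DecidableEq β]
    {v c : ι → β} : hammingDist v c = 1 ↔ ∃ i a, a ≠ c i ∧ v = update c i a := by
  constructor
  · intro h
    obtain ⟨i, hi⟩ := Finset.card_eq_one.mp h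
    have hdiff : ∀ j, v j ≠ c j ↔ j = i := by simpa [Finset.ext_iff] using hi
    refine ⟨i, v i, (hdiff i).2 rfl, funext fun j => ?_⟩
    rcases eq_or_ne j i with rfl | hj
    · simp
    · simpa [hj] using (hdiff j).not.2 hj
  · rintro ⟨i, a, ha, rfl⟩
    rw [hammingDist, Finset.card_eq_one]
    refine ⟨i, Finset.ext fun j => ?_⟩
    rcases eq_or_ne j i with rfl | hj <;> simp [*]

section Collapse

variable {α : Type*} [DecidableEq α]

theorem update_id_comp_perm (g : Perm α) (m a : α) :
    update id m a ∘ g = update g (g.symm m) a :=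
  update_comp_equiv id g m a

theorem perm_comp_update_id (y : Perm α) (m a : α) :
    y ∘ update id m a = update id (y m) (y a) ∘ y := by
  rw [comp_update, update_id_comp_perm, symm_apply_apply]
  rfl

theorem update_id_comp_swap (m a : α) : update id m a ∘ swap m a = update id m a := by
  funext x
  rcases eq_or_ne x m with rfl | hm
  · simp [update_apply]
  rcases eq_or_ne x a with rfl | ha
  · simp [update_apply]
  · simp [swap_apply_of_ne_of_ne hm ha, hm]

theorem not_injective_update_id_comp {m a : α} (h : m ≠ a) (g : Perm α) :
    ¬ Injective (update id m a ∘ g) := fun hinj =>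
  h <| g.symm.injective <| hinj <| by simp [h.symm]

variable [Fintype α]

theorem hammingDist_update_id_comp {m a : α} (h : m ≠ a) (g : Perm α) :
    hammingDist (update id m a ∘ g) g = 1 :=
  hammingDist_eq_one_iff.2 ⟨g.symm m, a, by simpa using h.symm, update_id_comp_perm g m a⟩

theorem exists_mem_alternatingGroup_update_id_comp_eq {m a : α} (h : m ≠ a) (g : Perm α) :
    ∃ g' ∈ alternatingGroup α, update id m a ∘ g' = update id m a ∘ g := by
  rcases Int.units_eq_one_or (Perm.sign g) with hg | hg
  · exact ⟨g, hg, rfl⟩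
  · refine ⟨swap m a * g, ?_, ?_⟩
    · simp [Perm.mem_alternatingGroup, Perm.sign_swap h, hg]
    · rw [Perm.coe_mul, ← comp_assoc, update_id_comp_swap]

end Collapse

def collapsedPerms (α : Type*) [DecidableEq α] : Set (α → α) :=
  {μ | ∃ (g : Perm α) (m a : α), m ≠ a ∧ μ = update id m a ∘ g}

theorem codeNbrs_permCode_alternatingGroup (q : ℕ) :
    codeNbrs (permCode (alternatingGroup (Fin q) : Set (Perm (Fin q)))) =
      collapsedPerms (Fin q) := by
  ext μ
  constructor
  · rintro ⟨-, _, ⟨g, -, rfl⟩, hd⟩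
    obtain ⟨i, a, ha, rfl⟩ := hammingDist_eq_one_iff.1 hd
    exact ⟨g, g i, a, ha.symm, by rw [update_id_comp_perm, symm_apply_apply]⟩
  · rintro ⟨g, m, a, hma, rfl⟩
    obtain ⟨g', hg', hg'g⟩ := exists_mem_alternatingGroup_update_id_comp_eq hma g
    refine ⟨?_, g', ⟨g', hg', rfl⟩, ?_⟩
    · rintro ⟨h, -, hh⟩
      exact not_injective_update_id_comp hma g (hh ▸ h.injective)
    · rw [← hg'g]
      exact hammingDist_update_id_comp hma g'

section Invariance

variable {α : Type*} [DecidableEq α]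

theorem perm_comp_comp_perm_mem_collapsedPerms {μ : α → α} (hμ : μ ∈ collapsedPerms α)
    (y z : Perm α) : y ∘ μ ∘ z ∈ collapsedPerms α := by
  obtain ⟨g, m, a, hma, rfl⟩ := hμ
  refine ⟨y * g * z, y m, y a, y.injective.ne hma, ?_⟩
  rw [← comp_assoc, ← comp_assoc, perm_comp_update_id]
  rfl

theorem exists_perm_comp_comp_perm_eq {μ ν : α → α} (hμ : μ ∈ collapsedPerms α)
    (hν : ν ∈ collapsedPerms α) : ∃ y z : Perm α, y ∘ μ ∘ z = ν := by
  obtain ⟨g₁, m₁, a₁, h₁, rfl⟩ := hμ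
  obtain ⟨g₂, m₂, a₂, h₂, rfl⟩ := hν
  obtain ⟨y, hym, hya⟩ :=
    MulAction.is_two_pretransitive_iff.1 (Perm.isMultiplyPretransitive α 2) h₁ h₂
  refine ⟨y, g₁⁻¹ * y⁻¹ * g₂, ?_⟩
  rw [Perm.smul_def] at hym hya
  rw [← comp_assoc, ← comp_assoc, perm_comp_update_id, hym, hya]
  funext x
  simp

end Invariance

theorem posAct_diagAct {m q : ℕ} (y : Perm (Fin q)) (z : Perm (Fin m)) (v : Fin m → Fin q) :
    posAct z (diagAct y v) = y ∘ v ∘ ⇑z⁻¹ := rfl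

theorem image_posAct_diagAct_collapsedPerms (q : ℕ) (y z : Perm (Fin q)) :
    (posAct z ∘ diagAct y) '' collapsedPerms (Fin q) = collapsedPerms (Fin q) := by
  refine Set.Subset.antisymm ?_ fun ν hν => ?_
  · exact Set.image_subset_iff.2 fun μ hμ => perm_comp_comp_perm_mem_collapsedPerms hμ _ _
  · refine ⟨posAct z⁻¹ (diagAct y⁻¹ ν), perm_comp_comp_perm_mem_collapsedPerms hν _ _, ?_⟩
    funext i
    simp [posAct, diagAct]

theorem image_posAct_diagAct_permCode_alternatingGroup_ne {q : ℕ} {y z : Perm (Fin q)}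
    (h : Perm.sign y ≠ Perm.sign z) :
    (posAct z ∘ diagAct y) '' permCode (alternatingGroup (Fin q) : Set (Perm (Fin q))) ≠
      permCode (alternatingGroup (Fin q) : Set (Perm (Fin q))) := by
  intro hE
  have hid : (fun i => (1 : Perm (Fin q)) i) ∈ permCode (alternatingGroup (Fin q) : Set _) :=
    ⟨1, one_mem _, rfl⟩
  rw [← hE] at hid
  obtain ⟨_, ⟨g, hg, rfl⟩, hgid⟩ := hid
  have hyz : y * g * z⁻¹ = 1 := Perm.ext fun i => congrFun hgid i
  have hsign := congrArg Perm.sign hyz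
  rw [map_mul, map_mul, Perm.mem_alternatingGroup.1 hg, mul_one, Perm.sign_inv, map_one,
    mul_eq_one_iff_eq_inv, Int.units_inv_eq_self] at hsign
  exact h hsign

/-- For `q ≥ 3`, `(C(A_q), Diag_q(S_q) ⋊ L)` is an elusive pair: every element of the
group fixes `Γ₁(C(A_q))` setwise, the group acts transitively on `Γ₁(C(A_q))`, but some
element does not fix `C(A_q)` setwise. -/
theorem stmt13 (q : ℕ) (hq : 3 ≤ q) :
    (∀ y z : Equiv.Perm (Fin q),
        (posAct z ∘ diagAct y) ''
            codeNbrs (permCode (alternatingGroup (Fin q) : Set (Equiv.Perm (Fin q))))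
          = codeNbrs (permCode (alternatingGroup (Fin q) : Set (Equiv.Perm (Fin q))))) ∧
    (∀ μ ∈ codeNbrs (permCode (alternatingGroup (Fin q) : Set (Equiv.Perm (Fin q)))),
        ∀ ν ∈ codeNbrs (permCode (alternatingGroup (Fin q) : Set (Equiv.Perm (Fin q)))),
          ∃ y z : Equiv.Perm (Fin q), posAct z (diagAct y μ) = ν) ∧
    ∃ y z : Equiv.Perm (Fin q),
      (posAct z ∘ diagAct y) '' permCode (alternatingGroup (Fin q) : Set (Equiv.Perm (Fin q)))
        ≠ permCode (alternatingGroup (Fin q) : Set (Equiv.Perm (Fin q))) := by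
  rw [codeNbrs_permCode_alternatingGroup]
  refine ⟨image_posAct_diagAct_collapsedPerms q, fun μ hμ ν hν => ?_, ?_⟩
  · obtain ⟨y, z, h⟩ := exists_perm_comp_comp_perm_eq hμ hν
    exact ⟨y, z⁻¹, by rwa [posAct_diagAct, inv_inv]⟩
  · have : Nontrivial (Fin q) := Fin.nontrivial_iff_two_le.2 (by omega)
    obtain ⟨y, hy⟩ := Perm.sign_surjective (Fin q) (-1)
    exact ⟨y, 1, image_posAct_diagAct_permCode_alternatingGroup_ne (by simp [hy])⟩
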